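/- Let G be a K3-free 1-plane graph of order n ≥ 4. Then A(G) ≥ 0, and A(G) = 0 holds if and only if every fake vertex z of the planarization G^× is incident with exactly two 3-faces and these two 3-faces are opposite around z (i.e., they share only the vertex z). -/

import Mathlib

open SimpleGraph

/-- Reversal of darts, as a permutation of the darts of a graph. -/
def dartReversal {V : Type*} (G : SimpleGraph V) : Equiv.Perm G.Dart :=
  Function.Involutive.toPerm _ (Dart.symm_involutive (G := G))

/-- The face-traversal permutation of a rotation system `rot`: the dart following `d` on
the boundary walk of the face to its left is `rot d.symm`. -/
def facePerm {V : Type*} (G : SimpleGraph V) (rot : Equiv.Perm G.Dart) :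
    Equiv.Perm G.Dart :=
  (dartReversal G).trans rot

/-- The faces of a rotation system: the orbits of the face-traversal permutation, viewed
as sets of darts.  The degree of a face (the number of edge-occurrences on its boundary
walk) is the number of darts in the orbit, i.e. `F.ncard`; the occurrences of a vertex `w`
on the boundary walk of `F` correspond to the darts `d ∈ F` with tail `d.toProd.1 = w`. -/
def facesOf {V : Type*} (G : SimpleGraph V) (rot : Equiv.Perm G.Dart) :
    Set (Set G.Dart) :=
  {F | ∃ d : G.Dart, F = {d' | (facePerm G rot).SameCycle d d'}}

/-- The face (orbit of the face-traversal permutation) containing a given dart. -/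
def faceOf {V : Type*} (G : SimpleGraph V) (rot : Equiv.Perm G.Dart) (d : G.Dart) :
    Set G.Dart :=
  {d' | (facePerm G rot).SameCycle d d'}

/-- A plane graph structure (planar embedding) on a simple graph `G`, given combinatorially
by a rotation system: a permutation of the darts that fixes tails of darts and whose cycles
are precisely the sets of darts at each vertex, which satisfies Euler's formula (this is
exactly the condition that the embedding determined by the rotation system has genus zero,
i.e. is an embedding in the plane). -/
structure SimpleGraph.PlaneEmbedding {V : Type*} [Fintype V] (G : SimpleGraph V) where
  /-- the rotation: the next dart (counterclockwise) around the tail vertex -/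
  rot : Equiv.Perm G.Dart
  rot_fixes_tail : ∀ d : G.Dart, (rot d).toProd.1 = d.toProd.1
  rot_single_cycle : ∀ d d' : G.Dart, d.toProd.1 = d'.toProd.1 → rot.SameCycle d d'
  /-- Euler's formula, componentwise (components with no edge contribute `1` each, the
  others `2` each); equivalently, every component is embedded with genus zero. -/
  euler : (Fintype.card V : ℤ) - Nat.card G.edgeSet + (facesOf G rot).ncard =
    Nat.card G.ConnectedComponent +
      Nat.card {C : G.ConnectedComponent //
        ∃ d : G.Dart, G.connectedComponentMk d.toProd.1 = C}
/-- Given a rotation system `rot` on a graph `H` whose vertices are the true vertices `V`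
together with the fake vertices `X` (the crossings), `CrossPair rot x u v` says that the
darts from the fake vertex `x` towards `u` and towards `v` are opposite around `x` (i.e.
the segments `xu` and `xv` are the two halves of one original edge `uv` crossed at `x`). -/
def CrossPair {V X : Type*} {H : SimpleGraph (V ⊕ X)} (rot : Equiv.Perm H.Dart)
    (x : X) (u v : V) : Prop :=
  ∃ d : H.Dart, d.toProd = (Sum.inr x, Sum.inl u) ∧
    (rot (rot d)).toProd = (Sum.inr x, Sum.inl v)

/-- A 1-plane structure on a simple graph `G` (i.e. a 1-planar drawing of `G`, recorded
combinatorially via its planarization): a plane embedding of a graph `H` on the vertex set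
`V ⊕ X`, where `V` are the true vertices of `G` and `X` are the fake vertices (one for each
crossing of the drawing), such that every fake vertex has degree `4` (exactly two edges
cross at each crossing point), fake vertices are pairwise non-adjacent (each edge of `G` is
crossed at most once, so each half-edge at a crossing ends at a true vertex), and the edges
of `G` are exactly the uncrossed edges of `H` between true vertices together with, for each
fake vertex `x`, the two edges joining the two pairs of opposite neighbours of `x` (each
crossed edge of `G` being subdivided by exactly one fake vertex). -/
structure OnePlaneStructure {V X : Type*} [Fintype V] [Fintype X]
    (G : SimpleGraph V) (H : SimpleGraph (V ⊕ X)) where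
  /-- the plane embedding of the planarization `H = G^×` -/
  emb : H.PlaneEmbedding
  fake_degree : ∀ x : X, Nat.card {d : H.Dart // d.toProd.1 = Sum.inr x} = 4
  fake_not_adjacent : ∀ x y : X, ¬ H.Adj (Sum.inr x) (Sum.inr y)
  adj_iff : ∀ u v : V, G.Adj u v ↔
    (H.Adj (Sum.inl u) (Sum.inl v) ∨ ∃ x : X, CrossPair emb.rot x u v)
  uncrossed_not_crossed : ∀ u v : V, H.Adj (Sum.inl u) (Sum.inl v) →
    ∀ x : X, ¬ CrossPair emb.rot x u v
  cross_unique : ∀ (x x' : X) (u v : V),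
    CrossPair emb.rot x u v → CrossPair emb.rot x' u v → x = x'

namespace OnePlaneStructure

variable {V X : Type*} [Fintype V] [Fintype X] {G : SimpleGraph V}
  {H : SimpleGraph (V ⊕ X)}

/-- `a(z)`: the number of incidences, counted with multiplicity, of the fake vertex `z`
with the `4⁺`-faces of the planarization. -/
noncomputable def aVal (S : OnePlaneStructure G H) (z : X) : ℕ :=
  {d : H.Dart | d.toProd.1 = Sum.inr z ∧ 4 ≤ (faceOf H S.emb.rot d).ncard}.ncard

/-- `c(F)`: the number of occurrences of fake vertices on the boundary walk of `F`. -/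
noncomputable def cVal (F : Set H.Dart) : ℕ :=
  {d ∈ F | (d.toProd.1).isRight = true}.ncard

/-- `A(G) = Σ_{z fake} (a(z) − 2)` (as an integer). -/
noncomputable def AVal (S : OnePlaneStructure G H) : ℤ := ∑ z : X, ((S.aVal z : ℤ) - 2)

end OnePlaneStructure

/-!
At a crossing `z` the planarization has four darts, each on a face of degree at least `3`, so
`a(z) = 4 - t(z)`, where `t(z)` counts the darts at `z` lying on `3`-faces. Two darts consecutive
around `z` cannot both lie on `3`-faces: the three true endpoints involved would span a triangle
of `G`, two of its sides being uncrossed edges and the third the edge crossed at `z`. Hence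
`t(z) ≤ 2`, i.e. `a(z) ≥ 2`, and equality means that the two `3`-faces at `z` sit at opposite
darts, which forces them to meet only in `z`.
-/

open Function

namespace Equiv.Perm

variable {α : Type*} [Finite α] (f : Perm α) {x y : α}

theorem minimalPeriod_pos (x : α) : 0 < minimalPeriod f x :=
  IsPeriodicPt.minimalPeriod_pos (orderOf_pos f) <| by
    rw [IsPeriodicPt, IsFixedPt, iterate_eq_pow, pow_orderOf_eq_one, one_apply]

theorem SameCycle.exists_iterate_eq_of_lt_minimalPeriod (h : f.SameCycle x y) :
    ∃ n < minimalPeriod f x, f^[n] x = y := by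
  obtain ⟨n, rfl⟩ := h.exists_nat_pow_eq
  exact ⟨n % minimalPeriod f x, Nat.mod_lt _ (f.minimalPeriod_pos x),
    by rw [iterate_mod_minimalPeriod_eq, iterate_eq_pow]⟩

theorem ncard_setOf_sameCycle (x : α) :
    {y | f.SameCycle x y}.ncard = minimalPeriod f x := by
  have : {y | f.SameCycle x y} = (f^[·] x) '' Set.Iio (minimalPeriod f x) := by
    ext y
    refine ⟨fun h => h.exists_iterate_eq_of_lt_minimalPeriod, ?_⟩
    rintro ⟨n, -, rfl⟩
    exact ⟨n, by simp only [iterate_eq_pow, zpow_natCast]⟩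
  rw [this, iterate_injOn_Iio_minimalPeriod.ncard_image, Set.ncard_Iio_nat]

end Equiv.Perm

instance SimpleGraph.Dart.finite {W : Type*} [Finite W] {H : SimpleGraph W} : Finite H.Dart :=
  Finite.of_injective _ Dart.toProd_injective

section RotationSystem

variable {W : Type*} {H : SimpleGraph W} {rot : Equiv.Perm H.Dart} {d e : H.Dart}

theorem facePerm_apply (rot : Equiv.Perm H.Dart) (d : H.Dart) :
    facePerm H rot d = rot d.symm := rfl

theorem mem_faceOf_self (rot : Equiv.Perm H.Dart) (d : H.Dart) : d ∈ faceOf H rot d :=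
  Equiv.Perm.SameCycle.refl _ _

theorem faceOf_eq_of_mem (he : e ∈ faceOf H rot d) : faceOf H rot e = faceOf H rot d :=
  Set.ext fun _ => ⟨he.trans, he.symm.trans⟩

theorem ncard_faceOf [Finite H.Dart] (rot : Equiv.Perm H.Dart) (d : H.Dart) :
    (faceOf H rot d).ncard = minimalPeriod (facePerm H rot) d :=
  Equiv.Perm.ncard_setOf_sameCycle _ d

theorem facePerm_facePerm_of_ncard_faceOf_eq_three [Finite H.Dart]
    (h3 : (faceOf H rot d).ncard = 3) :
    facePerm H rot (facePerm H rot d) = (rot⁻¹ d).symm := by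
  have h : facePerm H rot (facePerm H rot (facePerm H rot d)) = d := by
    rw [ncard_faceOf] at h3
    simpa [h3] using iterate_minimalPeriod (f := facePerm H rot) (x := d)
  rw [facePerm_apply _ (facePerm H rot (facePerm H rot d))] at h
  rw [← Equiv.Perm.eq_inv_iff_eq.2 h, Dart.symm_symm]

theorem mem_faceOf_of_ncard_faceOf_eq_three [Finite H.Dart]
    (h3 : (faceOf H rot d).ncard = 3) (he : e ∈ faceOf H rot d) :
    e = d ∨ e = facePerm H rot d ∨ e = (rot⁻¹ d).symm := by
  rw [← facePerm_facePerm_of_ncard_faceOf_eq_three h3]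
  rw [ncard_faceOf] at h3
  obtain ⟨n, hn, rfl⟩ := he.exists_iterate_eq_of_lt_minimalPeriod
  rw [h3] at hn
  interval_cases n <;> simp

def threeFaceDartsAt (rot : Equiv.Perm H.Dart) (v : W) : Set H.Dart :=
  {d | d.toProd.1 = v ∧ (faceOf H rot d).ncard = 3}

def threeFacesAt (rot : Equiv.Perm H.Dart) (v : W) : Set (Set H.Dart) :=
  {F ∈ facesOf H rot | F.ncard = 3 ∧ ∃ d ∈ F, d.toProd.1 = v}

theorem faceOf_image_threeFaceDartsAt (v : W) :
    faceOf H rot '' threeFaceDartsAt rot v = threeFacesAt rot v := by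
  ext F
  constructor
  · rintro ⟨d, ⟨hv, h3⟩, rfl⟩
    exact ⟨⟨d, rfl⟩, h3, d, mem_faceOf_self rot d, hv⟩
  · rintro ⟨⟨d₀, rfl⟩, h3, d, hd, hv⟩
    have hF := faceOf_eq_of_mem hd
    exact ⟨d, ⟨hv, hF ▸ h3⟩, hF⟩

variable (hrot : ∀ d : H.Dart, (rot d).toProd.1 = d.toProd.1)
include hrot

theorem fst_facePerm (d : H.Dart) : (facePerm H rot d).toProd.1 = d.toProd.2 := by
  rw [facePerm_apply, hrot, Dart.symm_toProd, Prod.fst_swap]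

theorem fst_rot_inv (d : H.Dart) : (rot⁻¹ d).toProd.1 = d.toProd.1 := by
  simpa using (hrot (rot⁻¹ d)).symm

/-- A face of degree at most two through `d` would force `rot d = d`. -/
theorem three_le_ncard_faceOf [Finite H.Dart] (hd : rot d ≠ d) :
    3 ≤ (faceOf H rot d).ncard := by
  rw [ncard_faceOf]
  set φ := facePerm H rot
  have h₁ : φ d ≠ d := fun h => d.adj.ne (by rw [← fst_facePerm hrot d, h])
  have h₂ : φ (φ d) ≠ d := by
    intro h
    have hφ : φ d = d.symm := Dart.ext _ _ <| Prod.ext (fst_facePerm hrot d)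
      (by rw [← fst_facePerm hrot (φ d), h]; rfl)
    have hrd : φ (φ d) = rot d := by rw [facePerm_apply, hφ, Dart.symm_symm]
    exact hd (hrd ▸ h)
  have hpos := Equiv.Perm.minimalPeriod_pos φ d
  have hp₁ : minimalPeriod φ d ≠ 1 := fun h =>
    h₁ (by simpa [h] using iterate_minimalPeriod (f := φ) (x := d))
  have hp₂ : minimalPeriod φ d ≠ 2 := fun h =>
    h₂ (by simpa [h] using iterate_minimalPeriod (f := φ) (x := d))
  omega

section TriangularFace

variable [Finite H.Dart] (h3 : (faceOf H rot d).ncard = 3)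
include h3

theorem snd_facePerm_of_ncard_faceOf_eq_three :
    (facePerm H rot d).toProd.2 = (rot⁻¹ d).toProd.2 := by
  rw [← fst_facePerm hrot, facePerm_facePerm_of_ncard_faceOf_eq_three h3]
  rfl

theorem adj_snd_rot_inv_of_ncard_faceOf_eq_three : H.Adj d.toProd.2 (rot⁻¹ d).toProd.2 := by
  simpa [fst_facePerm hrot, snd_facePerm_of_ncard_faceOf_eq_three hrot h3] using
    (facePerm H rot d).adj

theorem fst_of_mem_faceOf_of_ncard_faceOf_eq_three (he : e ∈ faceOf H rot d) :
    e.toProd.1 = d.toProd.1 ∨ e.toProd.1 = d.toProd.2 ∨ e.toProd.1 = (rot⁻¹ d).toProd.2 := by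
  rcases mem_faceOf_of_ncard_faceOf_eq_three h3 he with rfl | rfl | rfl
  · exact .inl rfl
  · exact .inr (.inl (fst_facePerm hrot d))
  · exact .inr (.inr rfl)

theorem eq_of_mem_faceOf_of_fst_eq (he : e ∈ faceOf H rot d) (hfst : e.toProd.1 = d.toProd.1) :
    e = d := by
  rcases mem_faceOf_of_ncard_faceOf_eq_three h3 he with rfl | rfl | rfl
  · rfl
  · exact absurd ((fst_facePerm hrot d).symm.trans hfst) d.adj.ne.symm
  · exact absurd (hfst.trans (fst_rot_inv hrot d).symm) (rot⁻¹ d).adj.ne.symm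

end TriangularFace

theorem injOn_faceOf_threeFaceDartsAt [Finite H.Dart] (v : W) :
    (threeFaceDartsAt rot v).InjOn (faceOf H rot) := by
  rintro d₁ ⟨hv₁, h3⟩ d₂ ⟨hv₂, -⟩ hF
  exact (eq_of_mem_faceOf_of_fst_eq hrot h3 (hF ▸ mem_faceOf_self rot d₂)
    (hv₂.trans hv₁.symm)).symm

theorem ncard_threeFaceDartsAt [Finite H.Dart] (v : W) :
    (threeFaceDartsAt rot v).ncard = (threeFacesAt rot v).ncard := by
  rw [← faceOf_image_threeFaceDartsAt, (injOn_faceOf_threeFaceDartsAt hrot v).ncard_image]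

end RotationSystem

namespace OnePlaneStructure

variable {V X : Type*} [Fintype V] [Fintype X] {G : SimpleGraph V} {H : SimpleGraph (V ⊕ X)}
  (S : OnePlaneStructure G H) {z : X} {d : H.Dart}

include S in
theorem ncard_setOf_fst_eq_inr (z : X) : {d : H.Dart | d.toProd.1 = Sum.inr z}.ncard = 4 := by
  rw [← Nat.card_coe_set_eq]
  exact S.fake_degree z

include S in
theorem exists_snd_eq_inl (hd : d.toProd.1 = Sum.inr z) : ∃ u, d.toProd.2 = Sum.inl u := by
  rcases hu : d.toProd.2 with u | y
  · exact ⟨u, rfl⟩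
  · exact absurd (hu ▸ hd ▸ d.adj) (S.fake_not_adjacent z y)

theorem rot_ne_self (hd : d.toProd.1 = Sum.inr z) : S.emb.rot d ≠ d := by
  intro hfix
  have hsub : {d' : H.Dart | d'.toProd.1 = Sum.inr z} ⊆ {d} := fun d' hd' => by
    obtain ⟨n, rfl⟩ := S.emb.rot_single_cycle d d' (hd.trans hd'.symm)
    exact Equiv.Perm.zpow_apply_eq_self_of_apply_eq_self hfix n
  have := Set.ncard_le_ncard hsub
  rw [S.ncard_setOf_fst_eq_inr z, Set.ncard_singleton] at this
  omega

theorem rot_notMem_threeFaceDartsAt (hK3 : G.CliqueFree 3)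
    (hd : d ∈ threeFaceDartsAt S.emb.rot (Sum.inr z)) :
    S.emb.rot d ∉ threeFaceDartsAt S.emb.rot (Sum.inr z) := by
  classical
  rintro ⟨-, h3'⟩
  obtain ⟨hz, h3⟩ := hd
  have hrot := S.emb.rot_fixes_tail
  have hz₁ : (S.emb.rot⁻¹ d).toProd.1 = Sum.inr z := (fst_rot_inv hrot d).trans hz
  have hz₃ : (S.emb.rot d).toProd.1 = Sum.inr z := (hrot d).trans hz
  obtain ⟨u₁, hu₁⟩ := S.exists_snd_eq_inl hz₁
  obtain ⟨u₂, hu₂⟩ := S.exists_snd_eq_inl hz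
  obtain ⟨u₃, hu₃⟩ := S.exists_snd_eq_inl hz₃
  have h₂₁ := adj_snd_rot_inv_of_ncard_faceOf_eq_three hrot h3
  have h₃₂ := adj_snd_rot_inv_of_ncard_faceOf_eq_three hrot h3'
  rw [Equiv.Perm.coe_inv, Equiv.symm_apply_apply] at h₃₂
  rw [hu₁, hu₂] at h₂₁
  rw [hu₂, hu₃] at h₃₂
  have h₁₃ : CrossPair S.emb.rot z u₁ u₃ :=
    ⟨S.emb.rot⁻¹ d, Prod.ext hz₁ hu₁, by simpa using Prod.ext hz₃ hu₃⟩
  exact hK3 {u₁, u₂, u₃} <| is3Clique_triple_iff.2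
    ⟨((S.adj_iff u₂ u₁).2 (.inl h₂₁)).symm, (S.adj_iff u₁ u₃).2 (.inr ⟨z, h₁₃⟩),
      ((S.adj_iff u₃ u₂).2 (.inl h₃₂)).symm⟩

theorem aVal_eq_ncard_sdiff (z : X) :
    S.aVal z = ({d : H.Dart | d.toProd.1 = Sum.inr z} \
      threeFaceDartsAt S.emb.rot (Sum.inr z)).ncard := by
  unfold aVal threeFaceDartsAt
  congr 1
  ext d
  simp only [Set.mem_ofPred_eq, Set.mem_sdiff, not_and]
  refine and_congr_right fun hd => ?_
  have := three_le_ncard_faceOf S.emb.rot_fixes_tail (S.rot_ne_self hd)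
  simp only [hd, true_implies]
  omega

theorem aVal_add_ncard_threeFaceDartsAt (z : X) :
    S.aVal z + (threeFaceDartsAt S.emb.rot (Sum.inr z)).ncard = 4 := by
  rw [aVal_eq_ncard_sdiff, Set.ncard_sdiff_add_ncard_of_subset (fun d hd => hd.1),
    S.ncard_setOf_fst_eq_inr z]

theorem ncard_threeFaceDartsAt_le_aVal (hK3 : G.CliqueFree 3) (z : X) :
    (threeFaceDartsAt S.emb.rot (Sum.inr z)).ncard ≤ S.aVal z := by
  rw [aVal_eq_ncard_sdiff]
  refine Set.ncard_le_ncard_of_injOn S.emb.rot (fun d hd => ⟨?_, ?_⟩) S.emb.rot.injective.injOn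
  · exact (S.emb.rot_fixes_tail d).trans hd.1
  · exact S.rot_notMem_threeFaceDartsAt hK3 hd

theorem two_le_aVal (hK3 : G.CliqueFree 3) (z : X) : 2 ≤ S.aVal z := by
  have := S.aVal_add_ncard_threeFaceDartsAt z
  have := S.ncard_threeFaceDartsAt_le_aVal hK3 z
  omega

theorem fst_eq_or_exists_of_mem_faceOf {d e : H.Dart}
    (hd : d ∈ threeFaceDartsAt S.emb.rot (Sum.inr z)) (he : e ∈ faceOf H S.emb.rot d) :
    e.toProd.1 = Sum.inr z ∨ ∃ a, (a = d ∨ a = S.emb.rot⁻¹ d) ∧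
      a.toProd.1 = Sum.inr z ∧ e.toProd.1 = a.toProd.2 := by
  have hrot := S.emb.rot_fixes_tail
  rcases fst_of_mem_faceOf_of_ncard_faceOf_eq_three hrot hd.2 he with h | h | h
  · exact .inl (h.trans hd.1)
  · exact .inr ⟨d, .inl rfl, hd.1, h⟩
  · exact .inr ⟨_, .inr rfl, (fst_rot_inv hrot d).trans hd.1, h⟩

theorem fst_eq_inr_of_mem_faceOf_of_mem_faceOf (hK3 : G.CliqueFree 3) {d₁ d₂ e₁ e₂ : H.Dart}
    (h₁ : d₁ ∈ threeFaceDartsAt S.emb.rot (Sum.inr z))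
    (h₂ : d₂ ∈ threeFaceDartsAt S.emb.rot (Sum.inr z)) (hne : d₁ ≠ d₂)
    (he₁ : e₁ ∈ faceOf H S.emb.rot d₁) (he₂ : e₂ ∈ faceOf H S.emb.rot d₂)
    (he : e₁.toProd.1 = e₂.toProd.1) : e₁.toProd.1 = Sum.inr z := by
  rcases S.fst_eq_or_exists_of_mem_faceOf h₁ he₁ with hz | ⟨a, ha₁, hz₁, hw₁⟩
  · exact hz
  rcases S.fst_eq_or_exists_of_mem_faceOf h₂ he₂ with hz | ⟨b, ha₂, hz₂, hw₂⟩
  · exact he.trans hz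
  obtain rfl : a = b :=
    Dart.ext _ _ (Prod.ext (hz₁.trans hz₂.symm) (hw₁.symm.trans (he.trans hw₂)))
  exfalso
  rcases ha₁ with rfl | rfl <;> rcases ha₂ with h | h
  · exact hne h
  · exact S.rot_notMem_threeFaceDartsAt hK3 h₁ (Equiv.Perm.eq_inv_iff_eq.1 h ▸ h₂)
  · exact S.rot_notMem_threeFaceDartsAt hK3 h₂ (Equiv.Perm.inv_eq_iff_eq.1 h ▸ h₁)
  · exact hne (S.emb.rot⁻¹.injective h)

theorem aVal_eq_two_iff (hK3 : G.CliqueFree 3) (z : X) :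
    S.aVal z = 2 ↔ ∃ F₁ F₂ : Set H.Dart,
      F₁ ∈ facesOf H S.emb.rot ∧ F₂ ∈ facesOf H S.emb.rot ∧ F₁ ≠ F₂ ∧
      F₁.ncard = 3 ∧ F₂.ncard = 3 ∧
      (∃ d ∈ F₁, d.toProd.1 = Sum.inr z) ∧ (∃ d ∈ F₂, d.toProd.1 = Sum.inr z) ∧
      (∀ w : V ⊕ X, (∃ d ∈ F₁, d.toProd.1 = w) → (∃ d ∈ F₂, d.toProd.1 = w) →
        w = Sum.inr z) ∧
      (∀ F ∈ facesOf H S.emb.rot, F.ncard = 3 → (∃ d ∈ F, d.toProd.1 = Sum.inr z) →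
        F = F₁ ∨ F = F₂) := by
  have hcount : S.aVal z = 2 ↔ (threeFacesAt S.emb.rot (Sum.inr z)).ncard = 2 := by
    have := S.aVal_add_ncard_threeFaceDartsAt z
    rw [← ncard_threeFaceDartsAt S.emb.rot_fixes_tail]
    omega
  rw [hcount, Set.ncard_eq_two]
  constructor
  · rintro ⟨F₁, F₂, hne, hfaces⟩
    obtain ⟨hmem₁, hmem₂⟩ := Set.pair_subset_iff.1 hfaces.ge
    obtain ⟨d₁, hd₁, rfl⟩ := (faceOf_image_threeFaceDartsAt (Sum.inr z)).ge hmem₁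
    obtain ⟨d₂, hd₂, rfl⟩ := (faceOf_image_threeFaceDartsAt (Sum.inr z)).ge hmem₂
    obtain ⟨hF₁, h3₁, hz₁⟩ := hmem₁
    obtain ⟨hF₂, h3₂, hz₂⟩ := hmem₂
    refine ⟨_, _, hF₁, hF₂, hne, h3₁, h3₂, hz₁, hz₂, ?_, fun F hF h3 hz => ?_⟩
    · rintro w ⟨e₁, he₁, rfl⟩ ⟨e₂, he₂, hw⟩
      exact S.fst_eq_inr_of_mem_faceOf_of_mem_faceOf hK3 hd₁ hd₂ (fun h => hne (h ▸ rfl))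
        he₁ he₂ hw.symm
    · have hmem : F ∈ threeFacesAt S.emb.rot (Sum.inr z) := ⟨hF, h3, hz⟩
      rwa [hfaces] at hmem
  · rintro ⟨F₁, F₂, hF₁, hF₂, hne, h3₁, h3₂, hz₁, hz₂, -, hunique⟩
    refine ⟨F₁, F₂, hne, Set.Subset.antisymm (fun F ⟨hF, h3, hz⟩ => hunique F hF h3 hz) ?_⟩
    exact Set.pair_subset_iff.2 ⟨⟨hF₁, h3₁, hz₁⟩, ⟨hF₂, h3₂, hz₂⟩⟩

end OnePlaneStructure

theorem k3free_one_plane_A_nonneg_general {V X : Type*} [Fintype V] [Fintype X]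
    (G : SimpleGraph V) (H : SimpleGraph (V ⊕ X)) (S : OnePlaneStructure G H)
    (hK3 : G.CliqueFree 3) :
    0 ≤ S.AVal ∧
      (S.AVal = 0 ↔ ∀ z : X, ∃ F₁ F₂ : Set H.Dart,
        F₁ ∈ facesOf H S.emb.rot ∧ F₂ ∈ facesOf H S.emb.rot ∧ F₁ ≠ F₂ ∧
        F₁.ncard = 3 ∧ F₂.ncard = 3 ∧
        (∃ d ∈ F₁, d.toProd.1 = Sum.inr z) ∧ (∃ d ∈ F₂, d.toProd.1 = Sum.inr z) ∧
        (∀ w : V ⊕ X, (∃ d ∈ F₁, d.toProd.1 = w) → (∃ d ∈ F₂, d.toProd.1 = w) →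
          w = Sum.inr z) ∧
        (∀ F ∈ facesOf H S.emb.rot, F.ncard = 3 → (∃ d ∈ F, d.toProd.1 = Sum.inr z) →
          F = F₁ ∨ F = F₂)) := by
  have hterm : ∀ z ∈ Finset.univ, (0 : ℤ) ≤ S.aVal z - 2 := fun z _ => by
    have := S.two_le_aVal hK3 z
    omega
  refine ⟨Finset.sum_nonneg hterm, ?_⟩
  rw [OnePlaneStructure.AVal, Finset.sum_eq_zero_iff_of_nonneg hterm]
  refine forall_congr' fun z => ?_
  rw [← S.aVal_eq_two_iff hK3 z]
  simp only [Finset.mem_univ, true_implies]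
  omega

/-- Let `G` be a `K₃`-free 1-plane graph of order `n ≥ 4`.  Then `A(G) ≥ 0`, and `A(G) = 0`
holds if and only if every fake vertex `z` of the planarization `G^×` is incident with
exactly two `3`-faces, and these two `3`-faces are opposite around `z` (they share only the
vertex `z`). -/
theorem k3free_one_plane_A_nonneg {V X : Type*} [Fintype V] [Fintype X]
    (G : SimpleGraph V) (H : SimpleGraph (V ⊕ X)) (S : OnePlaneStructure G H)
    (hn : 4 ≤ Fintype.card V) (hK3 : G.CliqueFree 3) :
    0 ≤ S.AVal ∧
      (S.AVal = 0 ↔ ∀ z : X, ∃ F₁ F₂ : Set H.Dart,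
        F₁ ∈ facesOf H S.emb.rot ∧ F₂ ∈ facesOf H S.emb.rot ∧ F₁ ≠ F₂ ∧
        F₁.ncard = 3 ∧ F₂.ncard = 3 ∧
        (∃ d ∈ F₁, d.toProd.1 = Sum.inr z) ∧ (∃ d ∈ F₂, d.toProd.1 = Sum.inr z) ∧
        (∀ w : V ⊕ X, (∃ d ∈ F₁, d.toProd.1 = w) → (∃ d ∈ F₂, d.toProd.1 = w) →
          w = Sum.inr z) ∧
        (∀ F ∈ facesOf H S.emb.rot, F.ncard = 3 → (∃ d ∈ F, d.toProd.1 = Sum.inr z) →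
          F = F₁ ∨ F = F₂)) :=
  k3free_one_plane_A_nonneg_general G H S hK3
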